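/- Let 𝒫 be a set of nonempty patterns, V the KMP FSM state set, f its transition function, and g(w) the longest proper suffix of w belonging to pref(𝒫). For any state v ∈ V and character σ such that vσ has no suffix in 𝒫: (1) if vσ ∉ pref(𝒫), then f(v,σ) = g(vσ); and (2) g(vσ) = f(g(v), σ). -/
import Mathlib


/-- `pref(Ps)`: the set of prefixes of patterns in `Ps`. -/
def prefP {α : Type*} (Ps : Set (List α)) : Set (List α) :=
  {w | ∃ P ∈ Ps, w <+: P}

/-- `IsF Ps v σ w`: `w = f(v,σ)`, the longest suffix of `vσ` lying in `pref(Ps)`. -/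
def IsF {α : Type*} (Ps : Set (List α)) (v : List α) (σ : α) (w : List α) : Prop :=
  w <:+ v ++ [σ] ∧ w ∈ prefP Ps ∧
  ∀ u, u <:+ v ++ [σ] → u ∈ prefP Ps → u.length ≤ w.length

/-- `IsG Ps w gw`: `gw = g(w)`, the longest proper suffix of `w` lying in `pref(Ps)`. -/
def IsG {α : Type*} (Ps : Set (List α)) (w gw : List α) : Prop :=
  gw <:+ w ∧ gw ≠ w ∧ gw ∈ prefP Ps ∧
  ∀ u, u <:+ w → u ≠ w → u ∈ prefP Ps → u.length ≤ gw.length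

lemma prefP_mono {α : Type*} {Ps : Set (List α)} {u w : List α}
    (h : u <+: w) (hw : w ∈ prefP Ps) : u ∈ prefP Ps := by
  obtain ⟨P, hP, hpre⟩ := hw
  exact ⟨P, hP, h.trans hpre⟩

lemma nil_mem_prefP {α : Type*} {Ps : Set (List α)} (hne : Ps.Nonempty) :
    ([] : List α) ∈ prefP Ps := by
  obtain ⟨P, hP⟩ := hne
  exact ⟨P, hP, List.nil_prefix⟩

lemma suffix_append_same {α : Type*} {a b l : List α} (h : a <:+ b) : a ++ l <:+ b ++ l := by
  obtain ⟨s, rfl⟩ := h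
  exact ⟨s, by simp⟩

/-- For a KMP-FSM state `v` and character `σ` such that `vσ` has no suffix in `Ps`:
(1) if `vσ ∉ pref(Ps)` then `f(v,σ) = g(vσ)`; (2) `g(vσ) = f(g(v), σ)`. -/
theorem kmp_f_g_relations
    {α : Type*} (Ps : Set (List α)) (hne : Ps.Nonempty) (heps : ([] : List α) ∉ Ps)
    (v : List α) (hv : v ∈ prefP Ps) (hvV : ∀ u, u <:+ v → u ∉ Ps)
    (σ : α) (hvσ : ∀ u, u <:+ v ++ [σ] → u ∉ Ps)
    (gv : List α) (hgv : IsG Ps v gv) :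
    ((v ++ [σ] ∉ prefP Ps) → ∀ w, IsF Ps v σ w ↔ IsG Ps (v ++ [σ]) w) ∧
    (∀ w, IsG Ps (v ++ [σ]) w ↔ IsF Ps gv σ w) := by
  obtain ⟨hgv_suf, hgv_ne, hgv_mem, hgv_max⟩ := hgv
  have hgv_lt : gv.length < v.length := by
    rcases lt_or_eq_of_le hgv_suf.length_le with h | h
    · exact h
    · exact absurd (hgv_suf.eq_of_length h) hgv_ne
  -- any proper suffix of v of length ≤ |gv| questions... key: suffixes of v shorter than
  -- or equal to gv are suffixes of gv
  have key : ∀ t, t <:+ v → t ≠ v → t ∈ prefP Ps → t <:+ gv := by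
    intro t ht htne htm
    exact List.suffix_of_suffix_length_le ht hgv_suf (hgv_max t ht htne htm)
  constructor
  · intro hnp w
    constructor
    · rintro ⟨hsuf, hmem, hmax⟩
      refine ⟨hsuf, ?_, hmem, fun u hu hune hum => hmax u hu hum⟩
      intro h; rw [h] at hmem; exact hnp hmem
    · rintro ⟨hsuf, hne', hmem, hmax⟩
      refine ⟨hsuf, hmem, fun u hu hum => ?_⟩
      have : u ≠ v ++ [σ] := by intro h; rw [h] at hum; exact hnp hum
      exact hmax u hu this hum
  · intro w
    have hgvσ_suf : gv ++ [σ] <:+ v ++ [σ] := suffix_append_same hgv_suf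
    constructor
    · rintro ⟨hsuf, hne', hmem, hmax⟩
      -- w is a proper suffix of v++[σ] in prefP; show it's a suffix of gv++[σ]
      have hwsuf : w <:+ gv ++ [σ] := by
        rcases List.suffix_concat_iff.mp hsuf with h | ⟨t, rfl, ht⟩
        · simp [h]
        · have htne : t ≠ v := by
            intro h; rw [h] at hne'; exact hne' rfl
          have htm : t ∈ prefP Ps := prefP_mono (List.prefix_append t [σ]) hmem
          exact suffix_append_same (key t ht htne htm)
      refine ⟨hwsuf, hmem, fun u hu hum => ?_⟩
      have hu' : u <:+ v ++ [σ] := hu.trans hgvσ_suf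
      have hune : u ≠ v ++ [σ] := by
        intro h
        have := hu.length_le
        rw [h] at this
        simp at this
        omega
      exact hmax u hu' hune hum
    · rintro ⟨hsuf, hmem, hmax⟩
      have hwsuf : w <:+ v ++ [σ] := hsuf.trans hgvσ_suf
      have hwne : w ≠ v ++ [σ] := by
        intro h
        have := hsuf.length_le
        rw [h] at this
        simp at this
        omega
      refine ⟨hwsuf, hwne, hmem, fun u hu hune hum => ?_⟩
      have : u <:+ gv ++ [σ] := by
        rcases List.suffix_concat_iff.mp hu with h | ⟨t, rfl, ht⟩
        · simp [h]
        · have htne : t ≠ v := fun h => hune (by rw [h])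
          have htm : t ∈ prefP Ps := prefP_mono (List.prefix_append t [σ]) hum
          exact suffix_append_same (key t ht htne htm)
      exact hmax u this hum
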